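/- The permutation operator P satisfies the Yang–Baxter (braid) relation: (P ⊗ id) ∘ (id ⊗ P) ∘ (P ⊗ id) = (id ⊗ P) ∘ (P ⊗ id) ∘ (id ⊗ P) as maps A ⊗ A ⊗ A → A ⊗ A ⊗ A. -/
import Mathlib


/- We model A = R·1 ⊕ R·x over R = ℤ[X,Y,Z,Z⁻¹]/(X²−1, Y²−1) as the free R-module
with basis {1, x} indexed by Fin 2 (0 ↔ 1, 1 ↔ x), tensor powers of A as free modules
with basis the corresponding product types, and R-linear maps by their matrices in
these bases (Kronecker product = tensor product of maps, matrix mult = composition). -/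

noncomputable section
open Kronecker

/-- ℤ[X,Y]/(X²−1, Y²−1) -/
abbrev Rb : Type :=
  MvPolynomial (Fin 2) ℤ ⧸
    (Ideal.span {MvPolynomial.X 0 ^ 2 - 1, MvPolynomial.X 1 ^ 2 - 1} :
      Ideal (MvPolynomial (Fin 2) ℤ))

/-- R = ℤ[X,Y,Z,Z⁻¹]/(X²−1, Y²−1), realized as Laurent polynomials in Z over Rb. -/
abbrev R : Type := LaurentPolynomial Rb

def Xv : R := LaurentPolynomial.C (Ideal.Quotient.mk _ (MvPolynomial.X 0))
def Yv : R := LaurentPolynomial.C (Ideal.Quotient.mk _ (MvPolynomial.X 1))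
def Zv : R := LaurentPolynomial.T 1
def Zinv : R := LaurentPolynomial.T (-1)

/-- Matrix of P : A⊗A → A⊗A, P(1⊗1)=X·1⊗1, P(1⊗x)=Z⁻¹·x⊗1, P(x⊗1)=Z·1⊗x,
P(x⊗x)=Y·x⊗x. -/
def PMat : Matrix (Fin 2 × Fin 2) (Fin 2 × Fin 2) R :=
  Matrix.of fun p q =>
    if p = (0,0) ∧ q = (0,0) then Xv
    else if p = (1,0) ∧ q = (0,1) then Zinv
    else if p = (0,1) ∧ q = (1,0) then Zv
    else if p = (1,1) ∧ q = (1,1) then Yv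
    else 0

/-- Matrix of m : A⊗A → A, m(1⊗1)=1, m(1⊗x)=x, m(x⊗1)=XZ·x, m(x⊗x)=0. -/
def mMat : Matrix (Fin 2) (Fin 2 × Fin 2) R :=
  Matrix.of fun i q =>
    if i = 0 ∧ q = (0,0) then 1
    else if i = 1 ∧ q = (0,1) then 1
    else if i = 1 ∧ q = (1,0) then Xv * Zv
    else 0

/-- Matrix of Δ : A → A⊗A, Δ(1) = x⊗1 + YZ·(1⊗x), Δ(x) = x⊗x. -/
def dMat : Matrix (Fin 2 × Fin 2) (Fin 2) R :=
  Matrix.of fun p j =>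
    if p = (1,0) ∧ j = 0 then 1
    else if p = (0,1) ∧ j = 0 then Yv * Zv
    else if p = (1,1) ∧ j = 1 then 1
    else 0

/-- Matrix of id ⊗ P on A⊗A⊗A, with A⊗(A⊗A) identified with (A⊗A)⊗A via the
associator on bases. -/
def idP : Matrix ((Fin 2 × Fin 2) × Fin 2) ((Fin 2 × Fin 2) × Fin 2) R :=
  (((1 : Matrix (Fin 2) (Fin 2) R) ⊗ₖ PMat)).submatrix
    (Equiv.prodAssoc (Fin 2) (Fin 2) (Fin 2)) (Equiv.prodAssoc (Fin 2) (Fin 2) (Fin 2))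


set_option linter.unusedSectionVars false

section GP
variable {n m : Type*} [Fintype n] [DecidableEq n] [Fintype m] [DecidableEq m]

/-- generalized permutation matrix: column `q` has entry `w q` in row `σ q`. -/
def gp (σ : n → n) (w : n → R) : Matrix n n R :=
  Matrix.of fun p q => if p = σ q then w q else 0

lemma gp_mul (σ τ : n → n) (w v : n → R) :
    gp σ w * gp τ v = gp (σ ∘ τ) (fun q => w (τ q) * v q) := by
  refine Matrix.ext fun p q => ?_
  rw [Matrix.mul_apply, Finset.sum_eq_single (τ q)]
  · by_cases h : p = σ (τ q) <;>
      simp only [gp, Matrix.of_apply, Function.comp, if_pos rfl, h, if_true, if_false,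
        ite_true, ite_false, zero_mul]
  · intro r _ hr
    simp only [gp, Matrix.of_apply, hr, if_false, ite_false, mul_zero]
  · intro h
    exact absurd (Finset.mem_univ _) h

lemma gp_kron (σ : n → n) (τ : m → m) (w : n → R) (v : m → R) :
    gp σ w ⊗ₖ gp τ v = gp (Prod.map σ τ) (fun q => w q.1 * v q.2) := by
  refine Matrix.ext fun p q => ?_
  obtain ⟨p1, p2⟩ := p
  obtain ⟨q1, q2⟩ := q
  simp only [Matrix.kroneckerMap_apply, gp, Matrix.of_apply, Prod.map, Prod.mk.injEq,
    Prod.ext_iff]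
  by_cases h1 : p1 = σ q1 <;> by_cases h2 : p2 = τ q2 <;>
    simp only [h1, h2, if_true, if_false, ite_true, ite_false, true_and, false_and,
      and_true, and_false, zero_mul, mul_zero, if_pos, if_neg, not_false_iff]

lemma gp_submatrix (e : m ≃ n) (σ : n → n) (w : n → R) :
    (gp σ w).submatrix e e = gp (e.symm ∘ σ ∘ e) (w ∘ e) := by
  refine Matrix.ext fun p q => ?_
  simp only [Matrix.submatrix_apply, gp, Matrix.of_apply, Function.comp]
  by_cases h : e p = σ (e q)
  · rw [if_pos h, if_pos (by rw [Equiv.eq_symm_apply]; exact h)]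
  · rw [if_neg h, if_neg (by rw [Equiv.eq_symm_apply]; exact h)]

lemma one_eq_gp : (1 : Matrix n n R) = gp id (fun _ => 1) := by
  refine Matrix.ext fun p q => ?_
  simp only [Matrix.one_apply, gp, Matrix.of_apply, id]

lemma gp_congr (σ τ : n → n) (w v : n → R) (h1 : ∀ q, σ q = τ q) (h2 : ∀ q, w q = v q) :
    gp σ w = gp τ v := by
  have : σ = τ := funext h1
  have : w = v := funext h2
  subst this; subst ‹σ = τ›; rfl

end GP

/-- coefficient of P on basis column (i,j). -/
def cf : Fin 2 × Fin 2 → R := fun q =>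
  if q = (0,0) then Xv else if q = (0,1) then Zinv else if q = (1,0) then Zv else Yv

lemma PMat_eq : PMat = gp Prod.swap cf := by
  refine Matrix.ext fun p q => ?_
  obtain ⟨i, j⟩ := p
  obtain ⟨a, b⟩ := q
  fin_cases i <;> fin_cases j <;> fin_cases a <;> fin_cases b <;>
    simp [PMat, gp, cf, Prod.swap, Prod.ext_iff]

/-- P satisfies the Yang–Baxter (braid) relation:
(P⊗id) ∘ (id⊗P) ∘ (P⊗id) = (id⊗P) ∘ (P⊗id) ∘ (id⊗P) on A⊗A⊗A. -/
theorem P_yang_baxter :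
    (PMat ⊗ₖ (1 : Matrix (Fin 2) (Fin 2) R)) * idP *
        (PMat ⊗ₖ (1 : Matrix (Fin 2) (Fin 2) R)) =
      idP * (PMat ⊗ₖ (1 : Matrix (Fin 2) (Fin 2) R)) * idP := by
  have hA : (PMat ⊗ₖ (1 : Matrix (Fin 2) (Fin 2) R)) =
      gp (Prod.map Prod.swap id) (fun q => cf q.1 * 1) := by
    rw [PMat_eq, one_eq_gp, gp_kron]
  have hB : idP = gp
      ((Equiv.prodAssoc (Fin 2) (Fin 2) (Fin 2)).symm ∘ Prod.map id Prod.swap ∘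
        Equiv.prodAssoc (Fin 2) (Fin 2) (Fin 2))
      ((fun q : Fin 2 × (Fin 2 × Fin 2) => (1 : R) * cf q.2) ∘
        Equiv.prodAssoc (Fin 2) (Fin 2) (Fin 2)) := by
    rw [idP, PMat_eq, one_eq_gp, gp_kron, gp_submatrix]
  rw [hA, hB, gp_mul, gp_mul, gp_mul, gp_mul]
  refine gp_congr _ _ _ _ (fun q => ?_) (fun q => ?_)
  · obtain ⟨⟨a, b⟩, c⟩ := q
    rfl
  · obtain ⟨⟨a, b⟩, c⟩ := q
    simp only [Function.comp_apply, Equiv.prodAssoc_apply, Equiv.prodAssoc_symm_apply,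
      Prod.map, id_eq, Prod.swap_prod_mk, one_mul, mul_one, Equiv.prodAssoc, Equiv.coe_fn_mk,
      Equiv.coe_fn_symm_mk, Prod.swap]
    ring

end
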